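/- arXiv:2209.05940 — 7 statements merged into one kernel-verified Lean document; each statement's English description precedes it below -/
import Mathlib

section
/- If a triangle ABC in the Euclidean plane has the property that for each of its sides there exists a point C' in the triangle at distance exactly 1 from both endpoints of that side, then the perimeter of ABC is at least 3. -/
open Real

noncomputable section

local notation "E2" => EuclideanSpace ℝ (Fin 2)

/-- For a point `Z` in the convex hull of `{X, Y, W}`, the sum of its distances to `X` and `Y`
is at most `dist X W + dist W Y`. -/
lemma strut_ineq (X Y W Z : EuclideanSpace ℝ (Fin 2))
    (hZ : Z ∈ convexHull ℝ ({X, Y, W} : Set (EuclideanSpace ℝ (Fin 2)))) :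
    dist X Z + dist Y Z ≤ dist X W + dist W Y := by
  have hconv : ConvexOn ℝ (Set.univ : Set (EuclideanSpace ℝ (Fin 2)))
      (fun z => dist z X + dist z Y) :=
    (convexOn_dist X convex_univ).add (convexOn_dist Y convex_univ)
  have hset : Convex ℝ {z : EuclideanSpace ℝ (Fin 2) |
      dist z X + dist z Y ≤ dist X W + dist W Y} := by
    have h := hconv.convex_le (dist X W + dist W Y)
    simpa using h
  have hsub : ({X, Y, W} : Set (EuclideanSpace ℝ (Fin 2))) ⊆
      {z | dist z X + dist z Y ≤ dist X W + dist W Y} := by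
    intro v hv
    have htri : dist X Y ≤ dist X W + dist W Y := dist_triangle X W Y
    rcases hv with rfl | rfl | rfl
    · simp only [Set.mem_setOf_eq, dist_self]
      linarith
    · simp only [Set.mem_setOf_eq, dist_self]
      rw [dist_comm v X]
      linarith
    · simp only [Set.mem_setOf_eq]
      rw [dist_comm v X]
  have h := convexHull_min hsub hset hZ
  simp only [Set.mem_setOf_eq] at h
  rw [dist_comm X Z, dist_comm Y Z]
  exact h

/-- A point in the convex hull of three points is within `max (dist X Y) (dist X W)` of `X`. -/
lemma dist_hull_le (X Y W Z : EuclideanSpace ℝ (Fin 2))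
    (hZ : Z ∈ convexHull ℝ ({X, Y, W} : Set (EuclideanSpace ℝ (Fin 2)))) :
    dist X Z ≤ max (dist X Y) (dist X W) := by
  have hsub : ({X, Y, W} : Set (EuclideanSpace ℝ (Fin 2))) ⊆
      Metric.closedBall X (max (dist X Y) (dist X W)) := by
    intro v hv
    rcases hv with rfl | rfl | rfl
    · simp only [Metric.mem_closedBall, dist_self]
      positivity
    · simp [Metric.mem_closedBall, dist_comm v X]
    · simp [Metric.mem_closedBall, dist_comm v X]
  have := convexHull_min hsub (convex_closedBall X _) hZ
  rw [Metric.mem_closedBall, dist_comm] at this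
  exact this

/-- If a triangle `ABC` has the property that each of its sides has a strut (a point of the
triangle at distance `1` from both endpoints of that side), then its perimeter is at least `3`. -/
theorem triangle_delta_perimeter_ge_three (A B C : E2)
    (h1 : ∃ Z ∈ convexHull ℝ ({A, B, C} : Set E2), dist A Z = 1 ∧ dist B Z = 1)
    (h2 : ∃ Z ∈ convexHull ℝ ({A, B, C} : Set E2), dist B Z = 1 ∧ dist C Z = 1)
    (h3 : ∃ Z ∈ convexHull ℝ ({A, B, C} : Set E2), dist C Z = 1 ∧ dist A Z = 1) :
    3 ≤ dist A B + dist B C + dist C A := by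
  obtain ⟨Z1, hZ1, hAZ1, hBZ1⟩ := h1
  obtain ⟨Z3, hZ3, hCZ3, hAZ3⟩ := h3
  -- From the strut on AB: 2 ≤ dist A C + dist C B
  have hb1 : (2 : ℝ) ≤ dist A C + dist C B := by
    have := strut_ineq A B C Z1 hZ1
    rw [hAZ1, hBZ1] at this
    linarith
  -- From the strut on CA: 2 ≤ dist C B + dist B A
  have hb3 : (2 : ℝ) ≤ dist C B + dist B A := by
    have hmem : Z3 ∈ convexHull ℝ ({C, A, B} : Set E2) := by
      have hsets : ({C, A, B} : Set E2) = ({A, B, C} : Set E2) := by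
        ext x; constructor <;> (intro hx; rcases hx with rfl | rfl | rfl <;> simp)
      rw [hsets]; exact hZ3
    have := strut_ineq C A B Z3 hmem
    rw [hCZ3, hAZ3] at this
    linarith
  -- One of dist A B, dist A C is at least 1
  have hmax : (1 : ℝ) ≤ max (dist A B) (dist A C) := by
    have := dist_hull_le A B C Z1 hZ1
    rw [hAZ1] at this
    exact this
  have hCB : dist C B = dist B C := dist_comm C B
  have hAC : dist A C = dist C A := dist_comm A C
  have hBA : dist B A = dist A B := dist_comm B A
  rcases le_max_iff.mp hmax with h | h
  · linarith
  · linarith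
end
end

section
/- Let P be a convex polygon whose difference body D(P) = P + (-P) is a regular hexagon with side length 1. Then there exists a ∈ [0, 1/2] such that P is obtained from an equilateral triangle with side length 1 + a by cutting off three congruent corner triangles with side length a; equivalently, P has three pairs of parallel sides of lengths a and 1 − a (degenerating to an equilateral triangle with unit side when a = 0). -/
open Pointwise

noncomputable section

local notation "E2" => EuclideanSpace ℝ (Fin 2)

/-!
The vertices of `D(P)` are unit vectors and `D(P)` is centrally symmetric, so by strict
convexity of the Euclidean ball the vertex set is closed under negation. Consecutive vertices
are at angle `π/3`, and a closed walk of six such steps that meets the antipode of each of its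
points cannot turn back; hence the vertices are `x, y, y - x, -x, -y, x - y`.

Write a vertex `v` of `D(P)` as `p - q` with `p, q ∈ P`. Then `p` maximises on `P` every linear
functional that is maximised at `v` on `D(P)`. For adjacent vertices `v, w` the functional
`⟪v + w, ·⟫` is maximised at both, so the corresponding points of `P` differ by a nonnegative
multiple of `w - v`. Going once around, these edge lengths alternate between `a` and `1 - a`,
and the six points span `P`. They are the corners cut off an equilateral triangle of side
`1 + a`, or, read from the next vertex, of side `2 - a`.
-/

open Set Module RealInnerProductSpace
open scoped EuclideanSpace

section Convex

variable {F ι : Type*}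

lemma mem_of_mem_convexHull_of_mem_sphere [NormedAddCommGroup F] [NormedSpace ℝ F]
    [StrictConvexSpace ℝ F] {s : Set F} {c u : F} {r : ℝ} (hr : r ≠ 0)
    (hs : s ⊆ Metric.closedBall c r) (hu : u ∈ convexHull ℝ s) (hur : u ∈ Metric.sphere c r) :
    u ∈ s :=
  extremePoints_convexHull_subset <|
    inter_extremePoints_subset_extremePoints_of_subset (convexHull_min hs (convex_closedBall c r))
      ⟨hu, StrictConvexSpace.sphere_subset_extremePoints_closedBall c hr hur⟩

lemma apply_le_of_sub_mem [AddCommGroup F] [Module ℝ F] {P : Set F} {V : ι → F}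
    (hPV : P + -P ⊆ convexHull ℝ (range V)) (l : F →ₗ[ℝ] ℝ) {k : ι}
    (hk : ∀ j, l (V j) ≤ l (V k)) {p z : F} (hp : p - V k ∈ P) (hz : z ∈ P) : l z ≤ l p := by
  have hd : z - (p - V k) ∈ convexHull ℝ (range V) :=
    hPV (by simpa [sub_eq_add_neg] using add_mem_add hz (neg_mem_neg.2 hp))
  have := convexHull_min (range_subset_iff.2 hk) (convex_halfSpace_le l.isLinear (l (V k))) hd
  simp only [mem_ofPred_eq, map_sub] at this
  linarith

lemma subset_convexHull_of_sub_mem [NormedAddCommGroup F] [NormedSpace ℝ F] [Finite ι]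
    [Nonempty ι] {P : Set F} {V m : ι → F} (hPV : P + -P ⊆ convexHull ℝ (range V))
    (hm : ∀ k, m k - V k ∈ P) : P ⊆ convexHull ℝ (range m) := by
  rw [← iInter_halfSpaces_eq (convex_convexHull ℝ _)
    ((finite_range m).isCompact_convexHull ℝ).isClosed]
  intro z hz
  simp only [mem_iInter]
  intro l
  obtain ⟨k, hk⟩ := Finite.exists_max fun j ↦ l (V j)
  exact ⟨m k, subset_convexHull ℝ _ (mem_range_self k),
    apply_le_of_sub_mem hPV l.toLinearMap hk (hm k) hz⟩

end Convex

section Hexagon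

variable {F : Type*} [AddCommGroup F]

def hexagon (x y : F) : Fin 6 → F := ![x, y, y - x, -x, -y, x - y]

lemma range_hexagon_rotate (x y : F) : range (hexagon y (y - x)) = range (hexagon x y) := by
  have : hexagon y (y - x) = hexagon x y ∘ (· + 1) := by
    funext k
    fin_cases k <;> simp [hexagon]
  rw [this, (add_right_surjective (1 : Fin 6)).range_comp]

variable [Module ℝ F]

/-- Starting at `c`, the sides are `a` and `1 - a` times the successive sides of `hexagon x y`,
alternately. -/
def alternatingHexagon (c : F) (a : ℝ) (x y : F) : Fin 6 → F :=
  ![c, c + a • (y - x), c + a • y - x, c - x, c + a • (y - x) - y, c + a • y - y]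

def cornerCutPoints (X Y Z : F) (a : ℝ) : Set F :=
  {X + (a / (1 + a)) • (Y - X), X + (a / (1 + a)) • (Z - X),
    Y + (a / (1 + a)) • (Z - Y), Y + (a / (1 + a)) • (X - Y),
    Z + (a / (1 + a)) • (X - Z), Z + (a / (1 + a)) • (Y - Z)}

lemma alternatingHexagon_add_three (c : F) (a : ℝ) (x y : F) (k : Fin 6) :
    alternatingHexagon c a x y (k + 3) = alternatingHexagon c a x y k - hexagon x y k := by
  fin_cases k <;> simp [alternatingHexagon, hexagon]

lemma range_alternatingHexagon_rotate (c : F) (a : ℝ) (x y : F) :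
    range (alternatingHexagon (c + a • (y - x)) (1 - a) y (y - x)) =
      range (alternatingHexagon c a x y) := by
  have : alternatingHexagon (c + a • (y - x)) (1 - a) y (y - x) =
      alternatingHexagon c a x y ∘ (· + 1) := by
    funext k
    fin_cases k <;> simp [alternatingHexagon] <;> module
  rw [this, (add_right_surjective (1 : Fin 6)).range_comp]

end Hexagon

variable {E : Type*} [NormedAddCommGroup E] [InnerProductSpace ℝ E]

/-- `x` and `y` are consecutive vertices of a regular hexagon of side `1` centred at `0`. -/
structure IsHexBasis (x y : E) : Prop where
  norm_left : ‖x‖ = 1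
  norm_right : ‖y‖ = 1
  inner_eq : ⟪x, y⟫ = 1 / 2

namespace IsHexBasis

variable {x y z : E}

lemma inner_self_left (h : IsHexBasis x y) : ⟪x, x⟫ = 1 := by
  simp [h.norm_left]

lemma inner_self_right (h : IsHexBasis x y) : ⟪y, y⟫ = 1 := by
  simp [h.norm_right]

lemma inner_eq_rev (h : IsHexBasis x y) : ⟪y, x⟫ = 1 / 2 := by
  rw [real_inner_comm, h.inner_eq]

lemma of_dist_eq_one (hx : ‖x‖ = 1) (hy : ‖y‖ = 1) (hxy : dist x y = 1) : IsHexBasis x y where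
  norm_left := hx
  norm_right := hy
  inner_eq := by
    have := norm_sub_sq_real x y
    rw [← dist_eq_norm, hxy, hx, hy] at this
    linarith

lemma rotate (h : IsHexBasis x y) : IsHexBasis y (y - x) where
  norm_left := h.norm_right
  norm_right := by
    rw [← pow_eq_one_iff_of_nonneg (norm_nonneg _) two_ne_zero, norm_sub_sq_real, h.norm_left,
      h.norm_right, h.inner_eq_rev]
    norm_num
  inner_eq := by
    rw [inner_sub_right, h.inner_self_right, h.inner_eq_rev]
    norm_num

lemma eq_zero_of_smul_add_smul_eq_zero (h : IsHexBasis x y) {s t : ℝ} (hst : s • x + t • y = 0) :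
    s = 0 ∧ t = 0 := by
  have hx := congrArg (⟪x, ·⟫) hst
  have hy := congrArg (⟪y, ·⟫) hst
  simp only [inner_add_right, real_inner_smul_right, h.inner_self_left, h.inner_self_right,
    h.inner_eq, h.inner_eq_rev, inner_zero_right] at hx hy
  constructor <;> linarith

lemma exists_range_alternatingHexagon_eq_cornerCutPoints (h : IsHexBasis x y) (c : E) {a : ℝ}
    (ha : 0 ≤ a) : ∃ X Y Z : E, dist X Y = 1 + a ∧ dist Y Z = 1 + a ∧ dist Z X = 1 + a ∧
      range (alternatingHexagon c a x y) = cornerCutPoints X Y Z a := by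
  have hnorm {v : E} (hv : ‖v‖ = 1) : ‖(1 + a) • v‖ = 1 + a := by
    rw [norm_smul, hv, Real.norm_of_nonneg (by linarith), mul_one]
  set t := a / (1 + a)
  have ht : t * (1 + a) = a := div_mul_cancel₀ a (by linarith)
  set X := c + a • y with hX
  set Y := X - (1 + a) • x with hY
  set Z := X - (1 + a) • y with hZ
  refine ⟨X, Y, Z, ?_, ?_, ?_, ?_⟩
  · rw [dist_eq_norm, sub_sub_cancel, hnorm h.norm_left]
  · rw [dist_eq_norm, sub_sub_sub_cancel_left, ← smul_sub, hnorm h.rotate.norm_right]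
  · rw [dist_eq_norm, sub_sub_cancel_left, norm_neg, hnorm h.norm_right]
  have h₁ : X + t • (Y - X) = c + a • (y - x) := by
    rw [hY, hX]; linear_combination (norm := module) -(ht • x)
  have h₂ : X + t • (Z - X) = c := by
    rw [hZ, hX]; linear_combination (norm := module) -(ht • y)
  have h₃ : Y + t • (Z - Y) = c - x := by
    rw [hZ, hY, hX]; linear_combination (norm := module) ht • (x - y)
  have h₄ : Y + t • (X - Y) = c + a • y - x := by
    rw [hY, hX]; linear_combination (norm := module) ht • x
  have h₅ : Z + t • (X - Z) = c + a • y - y := by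
    rw [hZ, hX]; linear_combination (norm := module) ht • y
  have h₆ : Z + t • (Y - Z) = c + a • (y - x) - y := by
    rw [hZ, hY, hX]; linear_combination (norm := module) ht • (y - x)
  simp only [cornerCutPoints, alternatingHexagon, Matrix.range_cons, Matrix.range_empty]
  rw [h₁, h₂, h₃, h₄, h₅, h₆]
  ext z
  simp only [mem_union, mem_insert_iff, mem_singleton_iff, mem_empty_iff_false, or_false]
  tauto

variable [Fact (finrank ℝ E = 2)]

/-- `z - y / 2` and `x - y / 2` are orthogonal to `y` and have the same length. -/
lemma eq_sub_or_eq (hxy : IsHexBasis x y) (hyz : IsHexBasis y z) : z = y - x ∨ z = x := by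
  have hw : ⟪x - (1 / 2 : ℝ) • y, x - (1 / 2 : ℝ) • y⟫ = 3 / 4 := by
    simp only [inner_sub_left, inner_sub_right, real_inner_smul_left, real_inner_smul_right,
      hxy.inner_self_left, hxy.inner_self_right, hxy.inner_eq, hxy.inner_eq_rev]
    norm_num
  have hu : ⟪z - (1 / 2 : ℝ) • y, z - (1 / 2 : ℝ) • y⟫ = 3 / 4 := by
    simp only [inner_sub_left, inner_sub_right, real_inner_smul_left, real_inner_smul_right,
      hyz.inner_self_left, hyz.inner_self_right, hyz.inner_eq, hyz.inner_eq_rev]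
    norm_num
  obtain ⟨c, hc⟩ := Submodule.mem_span_singleton.1 <|
    Submodule.mem_span_singleton_of_inner_eq_zero_of_inner_eq_zero (𝕜 := ℝ)
      (u := z - (1 / 2 : ℝ) • y) (v := y) (w := x - (1 / 2 : ℝ) • y)
      (by rintro rfl; simpa using hxy.norm_right)
      (by intro h0; rw [h0, inner_zero_left] at hw; norm_num at hw)
      (by rw [inner_sub_right, real_inner_smul_right, hyz.inner_eq, hyz.inner_self_left]; norm_num)
      (by rw [inner_sub_right, real_inner_smul_right, hxy.inner_eq_rev, hxy.inner_self_right]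
          norm_num)
  have hc2 : c ^ 2 = 1 := by
    rw [← hc, real_inner_smul_left, real_inner_smul_right, hw] at hu
    linarith
  rcases sq_eq_one_iff.1 hc2 with rfl | rfl
  · right
    simpa using hc.symm
  · left
    linear_combination (norm := module) -hc

lemma exists_nonneg_smul_of_inner (h : IsHexBasis x y) {d : E} (hd : ⟪x + y, d⟫ = 0)
    (hyd : 0 ≤ ⟪y, d⟫) : ∃ a : ℝ, 0 ≤ a ∧ d = a • (y - x) := by
  have hy : ⟪y, y - x⟫ = 1 / 2 := h.rotate.inner_eq
  obtain ⟨a, rfl⟩ := Submodule.mem_span_singleton.1 <|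
    Submodule.mem_span_singleton_of_inner_eq_zero_of_inner_eq_zero (𝕜 := ℝ) (u := d)
      (v := x + y) (w := y - x)
      (by
        intro h0
        have := congrArg (⟪x, ·⟫) h0
        simp only [inner_add_right, h.inner_self_left, h.inner_eq, inner_zero_right] at this
        norm_num at this)
      (by intro h0; rw [h0, inner_zero_right] at hy; norm_num at hy)
      hd
      (by
        simp only [inner_add_left, inner_sub_right, h.inner_self_left, h.inner_self_right,
          h.inner_eq, h.inner_eq_rev]
        ring)
  rw [real_inner_smul_right, hy] at hyd
  exact ⟨a, by linarith, rfl⟩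

lemma exists_nonneg_smul_of_sub_mem (h : IsHexBasis x y) {P : Set E}
    (hPV : P + -P ⊆ convexHull ℝ (range (hexagon x y))) {p q : E} (hp : p ∈ P)
    (hpx : p - x ∈ P) (hq : q ∈ P) (hqy : q - y ∈ P) : ∃ a : ℝ, 0 ≤ a ∧ q - p = a • (y - x) := by
  have support (u : E) (k : Fin 6) (hk : ∀ j, ⟪u, hexagon x y j⟫ ≤ ⟪u, hexagon x y k⟫)
      {p z : E} (hp : p - hexagon x y k ∈ P) (hz : z ∈ P) : ⟪u, z⟫ ≤ ⟪u, p⟫ :=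
    apply_le_of_sub_mem hPV (innerₛₗ ℝ u) hk hp hz
  have hxy₀ : ⟪x + y, q⟫ ≤ ⟪x + y, p⟫ := support _ 0 (by
    intro j
    fin_cases j <;> simp [hexagon, inner_add_left, inner_sub_right, inner_neg_right, h.norm_left,
      h.norm_right, h.inner_eq, h.inner_eq_rev] <;> norm_num) hpx hq
  have hxy₁ : ⟪x + y, p⟫ ≤ ⟪x + y, q⟫ := support _ 1 (by
    intro j
    fin_cases j <;> simp [hexagon, inner_add_left, inner_sub_right, inner_neg_right, h.norm_left,
      h.norm_right, h.inner_eq, h.inner_eq_rev] <;> norm_num) hqy hp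
  have hy₁ : ⟪y, p⟫ ≤ ⟪y, q⟫ := support _ 1 (by
    intro j
    fin_cases j <;> simp [hexagon, inner_sub_right, inner_neg_right, h.norm_right, h.inner_eq_rev]
      <;> norm_num) hqy hp
  exact h.exists_nonneg_smul_of_inner (by rw [inner_sub_right]; linarith)
    (by rw [inner_sub_right]; linarith)

lemma exists_alternatingHexagon_mem (h : IsHexBasis x y) {P : Set E}
    (hPV : P + -P = convexHull ℝ (range (hexagon x y))) :
    ∃ c, ∃ a ∈ Icc (0 : ℝ) 1, ∀ k, alternatingHexagon c a x y k ∈ P := by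
  have hdiff (k : Fin 6) : ∃ p ∈ P, p - hexagon x y k ∈ P := by
    obtain ⟨p, hp, q, hq, hpq⟩ : hexagon x y k ∈ P + -P :=
      hPV ▸ subset_convexHull ℝ _ (mem_range_self k)
    exact ⟨p, hp, by rw [← hpq]; simpa using hq⟩
  obtain ⟨p₀, hp₀, hp₀'⟩ := hdiff 0
  obtain ⟨p₁, hp₁, hp₁'⟩ := hdiff 1
  obtain ⟨p₂, hp₂, hp₂'⟩ := hdiff 2
  simp only [hexagon, Matrix.cons_val] at hp₀' hp₁' hp₂'
  have hPV₁ := range_hexagon_rotate x y ▸ hPV.le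
  have hPV₂ := sub_sub_cancel_left y x ▸ range_hexagon_rotate y (y - x) ▸ hPV₁
  obtain ⟨a, ha, h₀₁⟩ := h.exists_nonneg_smul_of_sub_mem hPV.le hp₀ hp₀' hp₁ hp₁'
  obtain ⟨b, hb, h₁₂⟩ := h.rotate.exists_nonneg_smul_of_sub_mem hPV₁ hp₁ hp₁' hp₂ hp₂'
  obtain ⟨a', -, h₂₀⟩ := (sub_sub_cancel_left y x ▸ h.rotate.rotate).exists_nonneg_smul_of_sub_mem
    hPV₂ hp₂ hp₂' hp₀' (by simpa using hp₀)
  -- the three edges close up the path `p₀, p₁, p₂, p₀ - x`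
  obtain ⟨hab, -⟩ := h.eq_zero_of_smul_add_smul_eq_zero (s := a + b - 1) (t := a' - a)
    (by linear_combination (norm := module) h₀₁ + h₁₂ + h₂₀)
  have e₁ : p₀ + a • (y - x) = p₁ := by linear_combination (norm := module) -h₀₁
  have e₂ : p₀ + a • y - x = p₂ := by linear_combination (norm := module) -h₀₁ - h₁₂ + hab • x
  refine ⟨p₀, a, ⟨ha, by linarith⟩, fun k ↦ ?_⟩
  fin_cases k <;> simp only [alternatingHexagon, Fin.zero_eta, Fin.mk_one, Fin.reduceFinMk,
    Matrix.cons_val]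
  · exact hp₀
  · rwa [e₁]
  · rwa [e₂]
  · exact hp₀'
  · rwa [e₁]
  · convert hp₂' using 1
    rw [← e₂]
    abel

theorem exists_eq_convexHull_alternatingHexagon (h : IsHexBasis x y) {P : Set E}
    (hP : Convex ℝ P) (hPV : P + -P = convexHull ℝ (range (hexagon x y))) :
    ∃ c, ∃ a ∈ Icc (0 : ℝ) 1, P = convexHull ℝ (range (alternatingHexagon c a x y)) := by
  obtain ⟨c, a, ha, hm⟩ := h.exists_alternatingHexagon_mem hPV
  refine ⟨c, a, ha, subset_antisymm (subset_convexHull_of_sub_mem hPV.le fun k ↦ ?_)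
    (convexHull_min (range_subset_iff.2 hm) hP)⟩
  rw [← alternatingHexagon_add_three]
  exact hm _

end IsHexBasis

/-- The walk `V 2 = V 0, V 3, V 4, V 5, V 0` is too short to pass through `-V 0`. -/
lemma apply_two_ne_apply_zero_of_neg_mem_range {V : Fin 6 → E}
    (hV : ∀ i, IsHexBasis (V i) (V (i + 1))) (hneg : -V 0 ∈ range V) : V 2 ≠ V 0 := by
  intro h20
  obtain ⟨j, hj⟩ := hneg
  have h00 := (hV 0).inner_self_left
  have key : ⟪V 0, V j⟫ = -1 := by rw [hj, inner_neg_right, h00]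
  have h01 := (hV 0).inner_eq
  have h23 := (hV 2).inner_eq
  have h34 := (hV 3).inner_eq
  have h50 := (hV 5).inner_eq
  simp only [Fin.reduceAdd] at h01 h23 h34 h50
  rw [h20] at h23
  fin_cases j <;> simp only [Fin.zero_eta, Fin.mk_one, Fin.reduceFinMk] at hj key
  · linarith
  · linarith
  · rw [h20] at key; linarith
  · linarith
  · rw [hj, inner_neg_right, real_inner_comm] at h34; linarith
  · rw [real_inner_comm] at h50; linarith

theorem eq_hexagon_of_neg_mem_range [Fact (finrank ℝ E = 2)] {V : Fin 6 → E}
    (hV : ∀ i, IsHexBasis (V i) (V (i + 1))) (hneg : ∀ i, -V i ∈ range V) :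
    V = hexagon (V 0) (V 1) := by
  have step : ∀ i, V (i + 1 + 1) = V (i + 1) - V i := fun i ↦
    ((hV i).eq_sub_or_eq (hV (i + 1))).resolve_right fun h ↦ by
      refine apply_two_ne_apply_zero_of_neg_mem_range (V := fun j ↦ V (i + j))
        (fun j ↦ by simpa only [add_assoc] using hV (i + j)) ?_ (by simpa [add_assoc] using h)
      obtain ⟨j, hj⟩ := hneg i
      exact ⟨j - i, by simpa using hj⟩
  have h2 := step 0
  have h3 := step 1
  have h4 := step 2
  have h5 := step 3
  simp only [Fin.reduceAdd, zero_add] at h2 h3 h4 h5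
  funext k
  fin_cases k <;> simp [hexagon, h2, h3, h4, h5] <;> abel

theorem difference_body_regular_hexagon_structure_general (S : Set E2)
    (P : Set E2) (hP : P = convexHull ℝ S)
    (hhex : ∃ V : Fin 6 → E2, P + -P = convexHull ℝ (Set.range V) ∧
      (∀ i, ‖V i‖ = 1) ∧ (∀ i, dist (V i) (V (i + 1)) = 1)) :
    ∃ a ∈ Set.Icc (0 : ℝ) (1 / 2), ∃ X Y Z : E2,
      dist X Y = 1 + a ∧ dist Y Z = 1 + a ∧ dist Z X = 1 + a ∧
      P = convexHull ℝ ({X + (a / (1 + a)) • (Y - X), X + (a / (1 + a)) • (Z - X),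
        Y + (a / (1 + a)) • (Z - Y), Y + (a / (1 + a)) • (X - Y),
        Z + (a / (1 + a)) • (X - Z), Z + (a / (1 + a)) • (Y - Z)} : Set E2) := by
  obtain ⟨V, hPV, hnorm, hdist⟩ := hhex
  have hV (i : Fin 6) : IsHexBasis (V i) (V (i + 1)) :=
    .of_dist_eq_one (hnorm i) (hnorm _) (hdist i)
  have hneg (i : Fin 6) : -V i ∈ range V := by
    refine mem_of_mem_convexHull_of_mem_sphere one_ne_zero (c := 0)
      (range_subset_iff.2 fun j ↦ by simp [hnorm]) ?_ (by simp [hnorm])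
    rw [← hPV, ← neg_mem_neg, neg_neg, neg_add, neg_neg, add_comm, hPV]
    exact subset_convexHull ℝ _ (mem_range_self i)
  have h₀ : IsHexBasis (V 0) (V 1) := hV 0
  rw [eq_hexagon_of_neg_mem_range hV hneg] at hPV
  obtain ⟨c, a, ha, hPc⟩ :=
    h₀.exists_eq_convexHull_alternatingHexagon (hP ▸ convex_convexHull ℝ S) hPV
  rcases le_total a (1 / 2) with ha' | ha'
  · obtain ⟨X, Y, Z, hXY, hYZ, hZX, hXYZ⟩ :=
      h₀.exists_range_alternatingHexagon_eq_cornerCutPoints c ha.1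
    exact ⟨a, ⟨ha.1, ha'⟩, X, Y, Z, hXY, hYZ, hZX, hPc.trans (congrArg _ hXYZ)⟩
  · obtain ⟨X, Y, Z, hXY, hYZ, hZX, hXYZ⟩ :=
      h₀.rotate.exists_range_alternatingHexagon_eq_cornerCutPoints (c + a • (V 1 - V 0))
        (a := 1 - a) (by linarith [ha.2])
    rw [range_alternatingHexagon_rotate] at hXYZ
    exact ⟨1 - a, ⟨by linarith [ha.2], by linarith⟩, X, Y, Z, hXY, hYZ, hZX,
      hPc.trans (congrArg _ hXYZ)⟩

/-- If the difference body `D(P) = P + (-P)` of a convex polygon `P` is a regular hexagon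
with side length `1`, then there is `a ∈ [0, 1/2]` such that `P` is obtained from an
equilateral triangle with side `1 + a` by cutting off three congruent corner triangles with
side `a` (for `a = 0` the polygon `P` is an equilateral triangle with unit side). -/
theorem difference_body_regular_hexagon_structure (S : Set E2) (hS : S.Finite)
    (P : Set E2) (hP : P = convexHull ℝ S)
    (hhex : ∃ V : Fin 6 → E2, P + -P = convexHull ℝ (Set.range V) ∧
      (∀ i, ‖V i‖ = 1) ∧ (∀ i, dist (V i) (V (i + 1)) = 1)) :
    ∃ a ∈ Set.Icc (0 : ℝ) (1 / 2), ∃ X Y Z : E2,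
      dist X Y = 1 + a ∧ dist Y Z = 1 + a ∧ dist Z X = 1 + a ∧
      P = convexHull ℝ ({X + (a / (1 + a)) • (Y - X), X + (a / (1 + a)) • (Z - X),
        Y + (a / (1 + a)) • (Z - Y), Y + (a / (1 + a)) • (X - Y),
        Z + (a / (1 + a)) • (X - Z), Z + (a / (1 + a)) • (Y - Z)} : Set E2) :=
  difference_body_regular_hexagon_structure_general S P hP hhex
end
end

section
/- Let a ∈ (0, 1/2] and let P be the hexagon obtained from an equilateral triangle with side length 1 + a by cutting off three congruent corner equilateral triangles with side length a. Then P does not have the Δ property: there is a side AB of P (of length a) such that no point C ∈ P satisfies dist(A,C) = dist(B,C) = 1. -/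
noncomputable section

local notation "E2" => EuclideanSpace ℝ (Fin 2)

def IsSide (P : Set E2) (A B : E2) : Prop :=
  A ≠ B ∧ IsExtreme ℝ P (segment ℝ A B)

/-!
The functional `Q ↦ ⟪(X - Y) + (X - Z), Q⟫` attains its maximum on the hexagon exactly along the
side `AB` cut off at the corner `X`, so `AB` is an exposed side, and the hexagon lies in the slab
between `AB` and the opposite side `YZ`, of width `√3 / 2`. A point `C` with
`dist A C = dist B C = 1` lies on the perpendicular bisector of `AB`, which in the plane is
parallel to `(X - Y) + (X - Z)`, at distance `√(1 - a² / 4) > √3 / 2` from the midpoint of `AB`;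
so it is outside the slab.
-/

open Set Module
open scoped RealInnerProductSpace

section CutCorner

variable {E : Type*} [AddCommGroup E] [Module ℝ E]

theorem isExposed_convexHull_of_eq_of_lt [TopologicalSpace E] {S T : Set E} (hS : S.Nonempty)
    (hT : T.Nonempty) (l : StrongDual ℝ E) {c : ℝ} (hlS : ∀ x ∈ S, l x = c)
    (hlT : ∀ y ∈ T, l y < c) :
    IsExposed ℝ (convexHull ℝ (S ∪ T)) (convexHull ℝ S) := by
  intro _
  refine ⟨l, ?_⟩
  have hl : IsLinearMap ℝ l := l.toLinearMap.isLinear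
  have hleS : ∀ x ∈ convexHull ℝ S, l x = c := fun x hx =>
    convexHull_min hlS (convex_hyperplane hl c) hx
  have hltT : ∀ y ∈ convexHull ℝ T, l y < c := fun y hy =>
    convexHull_min hlT (convex_halfSpace_lt hl c) hy
  have hle : ∀ y ∈ convexHull ℝ (S ∪ T), l y ≤ c := fun y hy =>
    convexHull_min (union_subset (fun z hz => (hlS z hz).le) fun z hz => (hlT z hz).le)
      (convex_halfSpace_le hl c) hy
  ext x
  constructor
  · intro hx
    exact ⟨convexHull_mono subset_union_left hx, fun y hy => (hleS x hx).symm ▸ hle y hy⟩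
  · rintro ⟨hx, hmax⟩
    rw [convexHull_union hS hT] at hx
    obtain ⟨p, hp, q, hq, α, β, hα, hβ, hαβ, rfl⟩ := mem_convexJoin.1 hx
    rcases hβ.eq_or_lt with rfl | hβ₀
    · simpa [show α = 1 by linarith] using hp
    · have hxc := hmax p (convexHull_mono subset_union_left hp)
      simp only [map_add, map_smul, smul_eq_mul, hleS p hp] at hxc
      have hq_lt := mul_lt_mul_of_pos_left (hltT q hq) hβ₀
      linarith [show α * c + β * c = c by rw [← add_mul, hαβ, one_mul]]

/-- `t` is the fraction of each side of the triangle `XYZ` cut off at each of its ends. -/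
def cutCornerHexagon (X Y Z : E) (t : ℝ) : Set E :=
  convexHull ℝ {X + t • (Y - X), X + t • (Z - X), Y + t • (Z - Y), Y + t • (X - Y),
    Z + t • (X - Z), Z + t • (Y - Z)}

variable {X Y Z : E} {t : ℝ}

theorem isExposed_segment_cutCornerHexagon [TopologicalSpace E] (l : StrongDual ℝ E)
    (hYZ : l Y = l Z) (hYX : l Y < l X) (ht : t < 1 / 2) :
    IsExposed ℝ (cutCornerHexagon X Y Z t) (segment ℝ (X + t • (Y - X)) (X + t • (Z - X))) := by
  rw [← convexHull_pair, cutCornerHexagon, ← singleton_union (a := X + t • (Z - X)),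
    ← insert_union]
  refine isExposed_convexHull_of_eq_of_lt (insert_nonempty _ _) (insert_nonempty _ _) l
    (c := l X + t * (l Y - l X)) ?_ ?_
  · simp only [mem_insert_iff, mem_singleton_iff, forall_eq_or_imp, forall_eq, map_add, map_smul,
      map_sub, smul_eq_mul, hYZ, and_self]
  · simp only [mem_insert_iff, mem_singleton_iff, forall_eq_or_imp, forall_eq, map_add, map_smul,
      map_sub, smul_eq_mul, hYZ]
    refine ⟨?_, ?_, ?_, ?_⟩ <;> nlinarith

theorem mem_Icc_of_mem_cutCornerHexagon (f : E →ₗ[ℝ] ℝ) (hYZ : f Y = f Z) (hYX : f Y ≤ f X)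
    (ht₀ : 0 ≤ t) (ht : t ≤ 1 / 2) {Q : E} (hQ : Q ∈ cutCornerHexagon X Y Z t) :
    f Q ∈ Icc (f Y) (f X + t * (f Y - f X)) := by
  refine convexHull_min ?_ ((convex_Icc _ _).linear_preimage f) hQ
  simp only [insert_subset_iff, singleton_subset_iff, mem_preimage, mem_Icc, map_add, map_smul,
    map_sub, smul_eq_mul, hYZ]
  refine ⟨⟨?_, ?_⟩, ⟨?_, ?_⟩, ⟨?_, ?_⟩, ⟨?_, ?_⟩, ⟨?_, ?_⟩, ⟨?_, ?_⟩⟩ <;> nlinarith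

end CutCorner

theorem dist_add_smul_sub_add_smul_sub {E : Type*} [SeminormedAddCommGroup E] [NormedSpace ℝ E]
    (X Y Z : E) (t : ℝ) : dist (X + t • (Y - X)) (X + t • (Z - X)) = |t| * dist Y Z := by
  rw [dist_eq_norm, dist_eq_norm, ← Real.norm_eq_abs, ← norm_smul]
  congr 1
  module

section Euclidean

variable {F : Type*} [NormedAddCommGroup F] [InnerProductSpace ℝ F]

theorem inner_sub_midpoint_sub_eq_zero {A B C : F} (h : dist A C = dist B C) :
    ⟪C - midpoint ℝ A B, B - A⟫ = 0 :=
  EuclideanGeometry.inner_vsub_vsub_of_dist_eq_of_dist_eq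
    (dist_left_midpoint_eq_dist_right_midpoint A B) h

theorem norm_sub_midpoint_sq {A B C : F} (h : dist A C = dist B C) :
    ‖C - midpoint ℝ A B‖ ^ 2 = dist A C ^ 2 - (dist A B / 2) ^ 2 := by
  have horth : ⟪C - midpoint ℝ A B, midpoint ℝ A B - A⟫ = 0 := by
    rw [midpoint_sub_left, real_inner_smul_right, inner_sub_midpoint_sub_eq_zero h, mul_zero]
  have hpyth := norm_add_sq_eq_norm_sq_add_norm_sq_real horth
  have hhalf : ‖midpoint ℝ A B - A‖ = dist A B / 2 := by
    rw [← dist_eq_norm, dist_midpoint_left, Real.norm_ofNat, inv_mul_eq_div]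
  rw [sub_add_sub_cancel, ← dist_eq_norm, dist_comm, hhalf] at hpyth
  nlinarith

theorem real_inner_sq_eq_of_inner_eq_zero (hF : finrank ℝ F = 2) {u v w : F} (hv : v ≠ 0)
    (hu : ⟪u, v⟫ = 0) (hw : ⟪w, v⟫ = 0) : ⟪u, w⟫ ^ 2 = ‖u‖ ^ 2 * ‖w‖ ^ 2 := by
  rcases eq_or_ne u 0 with rfl | hu₀
  · simp
  have : Fact (finrank ℝ F = 1 + 1) := ⟨hF⟩
  let u' : (ℝ ∙ v)ᗮ := ⟨u, Submodule.mem_orthogonal_singleton_iff_inner_left.2 hu⟩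
  let w' : (ℝ ∙ v)ᗮ := ⟨w, Submodule.mem_orthogonal_singleton_iff_inner_left.2 hw⟩
  obtain ⟨c, hc⟩ := (finrank_eq_one_iff_of_nonzero' u' (by simpa [u'] using hu₀)).1
    (Submodule.finrank_orthogonal_span_singleton hv) w'
  have hwu : w = c • u := congrArg Subtype.val hc.symm
  rw [hwu, real_inner_smul_right, norm_smul, real_inner_self_eq_norm_sq, Real.norm_eq_abs,
    mul_pow, mul_pow, sq_abs]
  ring

theorem inner_sub_add_sub_eq_of_dist_eq {X Y Z : F} (h : dist X Y = dist X Z) :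
    ⟪(X - Y) + (X - Z), Y⟫ = ⟪(X - Y) + (X - Z), Z⟫ := by
  refine (sub_eq_zero.1 ?_).symm
  rw [← inner_sub_right, ← sub_sub_sub_cancel_left Y Z X]
  exact (real_inner_add_sub_eq_zero_iff _ _).2 (by rwa [← dist_eq_norm, ← dist_eq_norm])

theorem inner_sub_sub_of_equilateral {X Y Z : F} {s : ℝ} (hXY : dist X Y = s)
    (hYZ : dist Y Z = s) (hZX : dist Z X = s) : ⟪X - Y, X - Z⟫ = s ^ 2 / 2 := by
  have h := norm_sub_sq_real (X - Y) (X - Z)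
  rw [sub_sub_sub_cancel_left, ← dist_eq_norm, ← dist_eq_norm, ← dist_eq_norm, hXY,
    dist_comm, hYZ, dist_comm, hZX] at h
  linarith

theorem inner_sub_midpoint_sq_of_dist_eq (hF : finrank ℝ F = 2) {u A B C : F} (hAB : A ≠ B)
    (hu : ⟪u, B - A⟫ = 0) (h : dist A C = dist B C) :
    ⟪u, C - midpoint ℝ A B⟫ ^ 2 = ‖u‖ ^ 2 * (dist A C ^ 2 - (dist A B / 2) ^ 2) := by
  rw [real_inner_sq_eq_of_inner_eq_zero hF (sub_ne_zero.2 hAB.symm) hu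
    (inner_sub_midpoint_sub_eq_zero h), norm_sub_midpoint_sq h]

theorem inner_sub_add_sub_sub_of_equilateral {X Y Z : F} {s : ℝ} (hXY : dist X Y = s)
    (hYZ : dist Y Z = s) (hZX : dist Z X = s) : ⟪(X - Y) + (X - Z), X - Y⟫ = 3 / 2 * s ^ 2 := by
  rw [inner_add_left, real_inner_self_eq_norm_sq, ← dist_eq_norm, hXY, real_inner_comm,
    inner_sub_sub_of_equilateral hXY hYZ hZX]
  ring

theorem norm_sub_add_sub_sq_of_equilateral {X Y Z : F} {s : ℝ} (hXY : dist X Y = s)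
    (hYZ : dist Y Z = s) (hZX : dist Z X = s) : ‖(X - Y) + (X - Z)‖ ^ 2 = 3 * s ^ 2 := by
  rw [norm_add_sq_real, inner_sub_sub_of_equilateral hXY hYZ hZX, ← dist_eq_norm,
    ← dist_eq_norm, hXY, dist_comm, hZX]
  ring

theorem not_dist_eq_one_of_mem_cutCornerHexagon (hF : finrank ℝ F = 2) {X Y Z C : F} {a : ℝ}
    (ha₀ : 0 < a) (ha₁ : a < 1) (hXY : dist X Y = 1 + a) (hYZ : dist Y Z = 1 + a)
    (hZX : dist Z X = 1 + a) (hC : C ∈ cutCornerHexagon X Y Z (a / (1 + a))) :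
    ¬(dist (X + (a / (1 + a)) • (Y - X)) C = 1 ∧ dist (X + (a / (1 + a)) • (Z - X)) C = 1) := by
  rintro ⟨hA, hB⟩
  set t := a / (1 + a)
  set A := X + t • (Y - X)
  set B := X + t • (Z - X)
  set u := (X - Y) + (X - Z)
  have hts : t * (1 + a) = a := div_mul_cancel₀ a (by positivity)
  have ht₀ : 0 < t := by positivity
  have ht : t ≤ 1 / 2 := by rw [div_le_iff₀ (by positivity)]; linarith
  have hAB : dist A B = a := by rw [dist_add_smul_sub_add_smul_sub, hYZ, abs_of_pos ht₀, hts]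
  have huYZ : ⟪u, Y⟫ = ⟪u, Z⟫ := inner_sub_add_sub_eq_of_dist_eq (by rw [hXY, dist_comm, hZX])
  have huXY : ⟪u, X⟫ - ⟪u, Y⟫ = 3 / 2 * (1 + a) ^ 2 := by
    rw [← inner_sub_right, inner_sub_add_sub_sub_of_equilateral hXY hYZ hZX]
  have hperp : ⟪u, B - A⟫ = 0 := by
    rw [show B - A = t • (Z - Y) by module, real_inner_smul_right, inner_sub_right, huYZ,
      sub_self, mul_zero]
  have hM : ⟪u, midpoint ℝ A B⟫ = ⟪u, X⟫ + t * (⟪u, Y⟫ - ⟪u, X⟫) := by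
    simp only [midpoint_eq_smul_add, A, B, real_inner_smul_right, inner_add_right, inner_sub_right,
      huYZ]
    norm_num
    ring
  have hsq := inner_sub_midpoint_sq_of_dist_eq hF (dist_ne_zero.1 (hAB.trans_ne ha₀.ne')) hperp
    (hA.trans hB.symm)
  rw [hA, hAB, norm_sub_add_sub_sq_of_equilateral hXY hYZ hZX, inner_sub_right, hM] at hsq
  have hslab := mem_Icc_of_mem_cutCornerHexagon (innerₛₗ ℝ u) huYZ
    (by simp only [innerₛₗ_apply_apply]; nlinarith) ht₀.le ht hC
  simp only [innerₛₗ_apply_apply, mem_Icc] at hslab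
  have htD : t * (⟪u, X⟫ - ⟪u, Y⟫) = 3 / 2 * (1 + a) * a := by
    rw [huXY]; linear_combination 3 / 2 * (1 + a) * hts
  set x := ⟪u, C⟫ - (⟪u, X⟫ + t * (⟪u, Y⟫ - ⟪u, X⟫))
  have hx : x ^ 2 ≤ (3 / 2 * (1 + a)) ^ 2 := by nlinarith
  have hgap : 0 < (1 + a) ^ 2 * (1 - a ^ 2) := mul_pos (by positivity) (by nlinarith)
  linarith

end Euclidean

/-- For `a ∈ (0, 1/2]`, the hexagon obtained from an equilateral triangle with side `1 + a`
by cutting off three congruent corner equilateral triangles with side `a` does not have the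
`Δ` property: it has a side `AB` of length `a` such that no point `C` of the hexagon
satisfies `dist A C = dist B C = 1`. -/
theorem cut_corner_hexagon_no_delta (a : ℝ) (ha0 : 0 < a) (ha : a ≤ 1 / 2)
    (X Y Z : E2) (hXY : dist X Y = 1 + a) (hYZ : dist Y Z = 1 + a) (hZX : dist Z X = 1 + a)
    (P : Set E2)
    (hP : P = convexHull ℝ ({X + (a / (1 + a)) • (Y - X), X + (a / (1 + a)) • (Z - X),
      Y + (a / (1 + a)) • (Z - Y), Y + (a / (1 + a)) • (X - Y),
      Z + (a / (1 + a)) • (X - Z), Z + (a / (1 + a)) • (Y - Z)} : Set E2)) :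
    ∃ A B : E2, IsSide P A B ∧ dist A B = a ∧
      ∀ C ∈ P, ¬(dist A C = 1 ∧ dist B C = 1) := by
  subst hP
  have ha₁ : a < 1 := by linarith
  have hts : a / (1 + a) * (1 + a) = a := div_mul_cancel₀ a (by positivity)
  have hAB : dist (X + (a / (1 + a)) • (Y - X)) (X + (a / (1 + a)) • (Z - X)) = a := by
    rw [dist_add_smul_sub_add_smul_sub, hYZ, abs_of_pos (by positivity), hts]
  have huYZ := inner_sub_add_sub_eq_of_dist_eq
    (show dist X Y = dist X Z by rw [hXY, dist_comm, hZX])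
  have huXY := inner_sub_add_sub_sub_of_equilateral hXY hYZ hZX
  rw [inner_sub_right] at huXY
  have hexp := isExposed_segment_cutCornerHexagon (innerSL ℝ ((X - Y) + (X - Z))) huYZ
    (by simp only [innerSL_apply_apply]; nlinarith) (t := a / (1 + a))
    (by rw [div_lt_iff₀ (by positivity)]; linarith)
  exact ⟨_, _, ⟨dist_ne_zero.1 (hAB.trans_ne ha0.ne'), hexp.isExtreme⟩, hAB, fun C hC =>
    not_dist_eq_one_of_mem_cutCornerHexagon finrank_euclideanSpace_fin ha0 ha₁ hXY hYZ hZX hC⟩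
end
end

section
/- Let P be a convex pentagon (possibly degenerate) in ℝ² with consecutive vertices A, B, C, E, F such that dist(A,E) = dist(B,E) = dist(B,F) = dist(C,F) = 1 and dist(A,B) + dist(B,C) ≥ 1. Then the perimeter of P is at least 3. -/
noncomputable section

local notation "E2" => EuclideanSpace ℝ (Fin 2)

/-- Let `P` be a (possibly degenerate) convex pentagon with consecutive vertices
`A, B, C, E, F` such that `|AE| = |BE| = |BF| = |CF| = 1` and `|AB| + |BC| ≥ 1`.
Then the perimeter of `P` is at least `3`. -/
theorem pentagon_perimeter_ge_three (A B C E F : E2) (P : Set E2)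
    (hP : P = convexHull ℝ ({A, B, C, E, F} : Set E2))
    (hAB : segment ℝ A B ⊆ frontier P)
    (hBC : segment ℝ B C ⊆ frontier P)
    (hCE : segment ℝ C E ⊆ frontier P)
    (hEF : segment ℝ E F ⊆ frontier P)
    (hFA : segment ℝ F A ⊆ frontier P)
    (hAE : dist A E = 1) (hBE : dist B E = 1) (hBF : dist B F = 1) (hCF : dist C F = 1)
    (hsum : 1 ≤ dist A B + dist B C) :
    3 ≤ dist A B + dist B C + dist C E + dist E F + dist F A := by
  -- Ptolemy: |AE|·|BF| ≤ |AB|·|EF| + |BE|·|AF|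
  have h1 := EuclideanGeometry.mul_dist_le_mul_dist_add_mul_dist A B E F
  -- Ptolemy: |CF|·|BE| ≤ |CB|·|FE| + |BF|·|CE|
  have h2 := EuclideanGeometry.mul_dist_le_mul_dist_add_mul_dist C B F E
  rw [hAE, hBF, hBE, one_mul, one_mul] at h1
  rw [hCF, hBE, hBF, one_mul, one_mul] at h2
  have hCE0 : (0:ℝ) ≤ dist C E := dist_nonneg
  have hFA0 : (0:ℝ) ≤ dist A F := dist_nonneg
  have hAB0 : (0:ℝ) ≤ dist A B := dist_nonneg
  have hBC0 : (0:ℝ) ≤ dist B C := dist_nonneg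
  have hEF0 : (0:ℝ) ≤ dist E F := dist_nonneg
  have hFAc : dist F A = dist A F := dist_comm F A
  have hCBc : dist C B = dist B C := dist_comm C B
  have hFEc : dist F E = dist E F := dist_comm F E
  rw [hCBc, hFEc] at h2
  rcases le_or_gt (dist E F) 1 with hx | hx
  · -- use Ptolemy bounds
    nlinarith [mul_nonneg hAB0 hEF0, mul_nonneg hBC0 hEF0]
  · -- use triangle inequalities: |BF| ≤ |BA| + |AF|, |BE| ≤ |BC| + |CE|
    have t1 : dist B F ≤ dist B A + dist A F := dist_triangle B A F
    have t2 : dist B E ≤ dist B C + dist C E := dist_triangle B C E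
    rw [hBF] at t1; rw [hBE] at t2
    rw [dist_comm B A] at t1
    nlinarith
end
end

section
/- Consider the pentagon A, B, C, E, F determined by angles α = ∠EAB = ∠EBA, β = ∠FBC = ∠FCB, γ = ∠BEF = ∠BFE with dist(A,E) = dist(B,E) = dist(B,F) = dist(C,F) = 1. If α = β = γ = arccos(1/4), then the perimeter of the pentagon ABCEF equals exactly 3. -/
open Real EuclideanGeometry RealInnerProductSpace

noncomputable section

local notation "E2" => EuclideanSpace ℝ (Fin 2)

private lemma pentagon_support_aux {P : Set (EuclideanSpace ℝ (Fin 2))} (hconv : Convex ℝ P)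
    (hne : (interior P).Nonempty) {X Y : EuclideanSpace ℝ (Fin 2)}
    (hseg : segment ℝ X Y ⊆ frontier P) (hX : X ∈ P) (hY : Y ∈ P) :
    ∃ f : EuclideanSpace ℝ (Fin 2) →L[ℝ] ℝ,
      f X = f Y ∧ (∀ z ∈ P, f z ≤ f X) ∧ ∀ a ∈ interior P, f a < f X := by
  obtain ⟨a₀, ha₀⟩ := hne
  have hM : midpoint ℝ X Y ∈ frontier P := hseg (midpoint_mem_segment X Y)
  have hMni : midpoint ℝ X Y ∉ interior P := by
    rw [frontier] at hM
    exact hM.2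
  obtain ⟨f, hf⟩ := geometric_hahn_banach_open_point hconv.interior isOpen_interior hMni
  set d := f (midpoint ℝ X Y) with hd
  have hle : ∀ z ∈ P, f z ≤ d := by
    intro z hz
    by_contra hgt
    push_neg at hgt
    set c := f (a₀ - z) with hc
    have habs : ∀ t : ℝ, 0 < t → t ≤ 1 → f z + t * c < d := by
      intro t ht0 ht1
      have hmem : z + t • (a₀ - z) ∈ interior P :=
        hconv.add_smul_sub_mem_interior hz ha₀ ⟨ht0, ht1⟩
      have h := hf _ hmem
      rw [map_add, map_smul, smul_eq_mul] at h
      exact h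
    set r : ℝ := (f z - d) / (|c| + 1) with hr
    have hcpos : (0:ℝ) < |c| + 1 := by positivity
    have hrpos : 0 < r := div_pos (by linarith) hcpos
    have hrmul : r * (|c| + 1) = f z - d := div_mul_cancel₀ _ (by positivity)
    set t₀ : ℝ := min 1 r with ht₀
    have ht₀pos : 0 < t₀ := lt_min one_pos hrpos
    have ht₀le : t₀ ≤ 1 := min_le_left _ _
    have ht₀r : t₀ ≤ r := min_le_right _ _
    have hkey := habs t₀ ht₀pos ht₀le
    have h1 : -|c| ≤ c := neg_abs_le c
    have h2 : (0:ℝ) ≤ |c| := abs_nonneg c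
    nlinarith [mul_le_mul_of_nonneg_right ht₀r h2, mul_le_mul_of_nonneg_left h1 ht₀pos.le]
  have hfX := hle X hX
  have hfY := hle Y hY
  have hmid : d = (f X + f Y) / 2 := by
    have h2 : midpoint ℝ X Y = (2⁻¹ : ℝ) • (X + Y) := by
      rw [midpoint_eq_smul_add, invOf_eq_inv]
    rw [hd, h2, map_smul, map_add, smul_eq_mul]
    ring
  have hXd : f X = d := by linarith
  have hYd : f Y = d := by linarith
  refine ⟨f, by linarith, fun z hz => by linarith [hle z hz], fun a ha => by
    have := hf a ha; linarith⟩

private lemma pentagon_span_aux {u v : EuclideanSpace ℝ (Fin 2)} (hu : ‖u‖ = 1) (hv : ‖v‖ = 1)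
    (huv : ⟪u, v⟫ = 7 / 8) : Submodule.span ℝ ({u, v} : Set (EuclideanSpace ℝ (Fin 2))) = ⊤ := by
  have huu : ⟪u, u⟫ = 1 := by rw [real_inner_self_eq_norm_sq, hu]; norm_num
  have hvv : ⟪v, v⟫ = 1 := by rw [real_inner_self_eq_norm_sq, hv]; norm_num
  have hvu : ⟪v, u⟫ = 7 / 8 := by rw [real_inner_comm]; exact huv
  have hli : LinearIndependent ℝ ![u, v] := by
    rw [LinearIndependent.pair_iff]
    intro s t hst
    have h1 : ⟪s • u + t • v, u⟫ = 0 := by rw [hst, inner_zero_left]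
    have h2 : ⟪s • u + t • v, v⟫ = 0 := by rw [hst, inner_zero_left]
    rw [inner_add_left, real_inner_smul_left, real_inner_smul_left, huu, hvu] at h1
    rw [inner_add_left, real_inner_smul_left, real_inner_smul_left, huv, hvv] at h2
    constructor <;> linarith
  have hrange : Set.range ![u, v] = ({u, v} : Set (EuclideanSpace ℝ (Fin 2))) := by
    simp only [Matrix.range_cons, Matrix.range_empty, Set.union_empty, Set.union_singleton]
    exact Set.pair_comm v u
  have := hli.span_eq_top_of_card_eq_finrank
    (by simp [finrank_euclideanSpace])
  rw [hrange] at this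
  exact this

set_option maxHeartbeats 2000000 in
/-- For the convex pentagon `A, B, C, E, F` with `|AE| = |BE| = |BF| = |CF| = 1` and
`∠EAB = ∠EBA = ∠FBC = ∠FCB = ∠BEF = ∠BFE = arccos(1/4)`, the perimeter equals `3`. -/
theorem special_pentagon_perimeter_eq_three (A B C E F : E2) (P : Set E2)
    (hP : P = convexHull ℝ ({A, B, C, E, F} : Set E2))
    (hAB : segment ℝ A B ⊆ frontier P)
    (hBC : segment ℝ B C ⊆ frontier P)
    (hCE : segment ℝ C E ⊆ frontier P)
    (hEF : segment ℝ E F ⊆ frontier P)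
    (hFA : segment ℝ F A ⊆ frontier P)
    (hAE : dist A E = 1) (hBE : dist B E = 1) (hBF : dist B F = 1) (hCF : dist C F = 1)
    (h1 : ∠ E A B = Real.arccos (1 / 4)) (h2 : ∠ E B A = Real.arccos (1 / 4))
    (h3 : ∠ F B C = Real.arccos (1 / 4)) (h4 : ∠ F C B = Real.arccos (1 / 4))
    (h5 : ∠ B E F = Real.arccos (1 / 4)) (h6 : ∠ B F E = Real.arccos (1 / 4)) :
    dist A B + dist B C + dist C E + dist E F + dist F A = 3 := by
  have hcos : Real.cos (Real.arccos (1 / 4)) = 1 / 4 :=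
    Real.cos_arccos (by norm_num) (by norm_num)
  -- dist A B = 1/2
  have hdAB : dist A B = 1 / 2 := by
    have hlaw := EuclideanGeometry.law_cos E A B
    rw [h1, hcos, dist_comm E A, hAE, dist_comm E B, hBE] at hlaw
    have hz : dist B A * (dist B A - 1 / 2) = 0 := by nlinarith
    rcases mul_eq_zero.1 hz with h | h
    · exfalso
      have : B = A := dist_eq_zero.1 h
      rw [this] at h1
      rw [EuclideanGeometry.angle_self_right] at h1
      have := congrArg Real.cos h1.symm
      rw [hcos, Real.cos_pi_div_two] at this
      norm_num at this
    · rw [dist_comm]; linarith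
  -- dist B C = 1/2
  have hdBC : dist B C = 1 / 2 := by
    have hlaw := EuclideanGeometry.law_cos F C B
    rw [h4, hcos, dist_comm F C, hCF, dist_comm F B, hBF] at hlaw
    have hz : dist B C * (dist B C - 1 / 2) = 0 := by nlinarith
    rcases mul_eq_zero.1 hz with h | h
    · exfalso
      have : B = C := dist_eq_zero.1 h
      rw [this] at h4
      rw [EuclideanGeometry.angle_self_right] at h4
      have := congrArg Real.cos h4.symm
      rw [hcos, Real.cos_pi_div_two] at this
      norm_num at this
    · linarith
  -- dist E F = 1/2
  have hdEF : dist E F = 1 / 2 := by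
    have hlaw := EuclideanGeometry.law_cos B E F
    rw [h5, hcos, hBE, hBF] at hlaw
    have hz : dist F E * (dist F E - 1 / 2) = 0 := by nlinarith
    rcases mul_eq_zero.1 hz with h | h
    · exfalso
      have : F = E := dist_eq_zero.1 h
      rw [this] at h5
      rw [EuclideanGeometry.angle_self_right] at h5
      have := congrArg Real.cos h5.symm
      rw [hcos, Real.cos_pi_div_two] at this
      norm_num at this
    · rw [dist_comm]; linarith
  -- vectors
  set u : E2 := E - B with hu_def
  set v : E2 := F - B with hv_def
  set w : E2 := A - B with hw_def
  set c : E2 := C - B with hc_def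
  have hnu : ‖u‖ = 1 := by rw [hu_def, ← dist_eq_norm, dist_comm]; exact hBE
  have hnv : ‖v‖ = 1 := by rw [hv_def, ← dist_eq_norm, dist_comm]; exact hBF
  have hnw : ‖w‖ = 1 / 2 := by rw [hw_def, ← dist_eq_norm]; exact hdAB
  have hnc : ‖c‖ = 1 / 2 := by rw [hc_def, ← dist_eq_norm, ← dist_comm]; exact hdBC
  have huv : ⟪u, v⟫ = 7 / 8 := by
    have h := norm_sub_sq_real u v
    have huvd : ‖u - v‖ = 1 / 2 := by
      have : u - v = E - F := by rw [hu_def, hv_def]; abel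
      rw [this, ← dist_eq_norm]; exact hdEF
    rw [huvd, hnu, hnv] at h
    nlinarith
  have hwu : ⟪w, u⟫ = 1 / 8 := by
    have h := norm_sub_sq_real w u
    have hwud : ‖w - u‖ = 1 := by
      have : w - u = A - E := by rw [hw_def, hu_def]; abel
      rw [this, ← dist_eq_norm]; exact hAE
    rw [hwud, hnw, hnu] at h
    nlinarith
  have hcv : ⟪c, v⟫ = 1 / 8 := by
    have h := norm_sub_sq_real c v
    have hcvd : ‖c - v‖ = 1 := by
      have : c - v = C - F := by rw [hc_def, hv_def]; abel
      rw [this, ← dist_eq_norm]; exact hCF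
    rw [hcvd, hnc, hnv] at h
    nlinarith
  have huu : ⟪u, u⟫ = 1 := by rw [real_inner_self_eq_norm_sq, hnu]; norm_num
  have hvv : ⟪v, v⟫ = 1 := by rw [real_inner_self_eq_norm_sq, hnv]; norm_num
  have hvu : ⟪v, u⟫ = 7 / 8 := by rw [real_inner_comm]; exact huv
  have hspan := pentagon_span_aux hnu hnv huv
  -- membership in P
  have hPconv : Convex ℝ P := by rw [hP]; exact convex_convexHull ℝ _
  have hmemP : ∀ z ∈ ({A, B, C, E, F} : Set E2), z ∈ P := by
    intro z hz; rw [hP]; exact subset_convexHull ℝ _ hz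
  have hA : A ∈ P := hmemP A (by simp)
  have hB : B ∈ P := hmemP B (by simp)
  have hC : C ∈ P := hmemP C (by simp)
  have hE : E ∈ P := hmemP E (by simp)
  have hF : F ∈ P := hmemP F (by simp)
  -- interior nonempty
  have hne : (interior P).Nonempty := by
    rw [hP]
    rw [(convex_convexHull ℝ _).interior_nonempty_iff_affineSpan_eq_top]
    rw [affineSpan_convexHull]
    have hBmem : B ∈ ({A, B, C, E, F} : Set E2) := by simp
    have hdir : vectorSpan ℝ ({A, B, C, E, F} : Set E2) = ⊤ := by
      rw [eq_top_iff, ← hspan]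
      rw [Submodule.span_le]
      rintro x (rfl | rfl)
      · have := vsub_mem_vectorSpan ℝ (show E ∈ ({A, B, C, E, F} : Set E2) by simp) hBmem
        simpa [vsub_eq_sub, hu_def] using this
      · have := vsub_mem_vectorSpan ℝ (show F ∈ ({A, B, C, E, F} : Set E2) by simp) hBmem
        simpa [vsub_eq_sub, hv_def] using this
    rw [← AffineSubspace.direction_eq_top_iff_of_nonempty
      (s := affineSpan ℝ ({A, B, C, E, F} : Set E2)) ⟨B, subset_affineSpan ℝ _ hBmem⟩]
    rw [direction_affineSpan]
    exact hdir
  -- general contradiction from a constant functional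
  have hcontra : ∀ f : E2 →L[ℝ] ℝ, f u = 0 → f v = 0 → (∀ a ∈ interior P, f a < f B) → False := by
    intro f hfu hfv hflt
    obtain ⟨a₀, ha₀⟩ := hne
    have hmem : a₀ - B ∈ Submodule.span ℝ ({u, v} : Set E2) := by rw [hspan]; trivial
    obtain ⟨s, t, hst⟩ := Submodule.mem_span_pair.1 hmem
    have : f a₀ = f B := by
      have h := congrArg f hst
      rw [map_add, map_smul, map_smul, smul_eq_mul, smul_eq_mul, hfu, hfv] at h
      have h2 : f (a₀ - B) = f a₀ - f B := map_sub f a₀ B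
      rw [h2] at h
      linarith
    linarith [hflt a₀ ha₀]
  -- decompose w
  have hwmem : w ∈ Submodule.span ℝ ({u, v} : Set E2) := by rw [hspan]; trivial
  obtain ⟨s, t, hst⟩ := Submodule.mem_span_pair.1 hwmem
  have hswu : s * 1 + t * (7 / 8) = 1 / 8 := by
    have h := congrArg (fun x => ⟪x, u⟫) hst
    simp only [inner_add_left, real_inner_smul_left, huu, hvu] at h
    rw [hwu] at h; linarith
  have hsww : s * (1 / 8) + t * ⟪w, v⟫ = 1 / 4 := by
    have h := congrArg (fun x => ⟪x, w⟫) hst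
    simp only [inner_add_left, real_inner_smul_left] at h
    rw [real_inner_comm w u, hwu, real_inner_comm w v] at h
    rw [real_inner_self_eq_norm_sq, hnw] at h
    nlinarith
  have hswv : s * (7 / 8) + t * 1 = ⟪w, v⟫ := by
    have h := congrArg (fun x => ⟪x, v⟫) hst
    simp only [inner_add_left, real_inner_smul_left, huv, hvv] at h
    linarith
  have ht2 : t ^ 2 = 1 := by
    linear_combination (64/15) * hsww + (64*t/15) * hswv - (64/15)*(1/8 + 7*t/8) * hswu
  -- decompose c
  have hcmem : c ∈ Submodule.span ℝ ({u, v} : Set E2) := by rw [hspan]; trivial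
  obtain ⟨m, n, hmn⟩ := Submodule.mem_span_pair.1 hcmem
  have hmcv : m * (7 / 8) + n * 1 = 1 / 8 := by
    have h := congrArg (fun x => ⟪x, v⟫) hmn
    simp only [inner_add_left, real_inner_smul_left, huv, hvv] at h
    rw [hcv] at h; linarith
  have hmcc : m * ⟪c, u⟫ + n * (1 / 8) = 1 / 4 := by
    have h := congrArg (fun x => ⟪x, c⟫) hmn
    simp only [inner_add_left, real_inner_smul_left] at h
    rw [real_inner_comm c u, real_inner_comm c v, hcv] at h
    rw [real_inner_self_eq_norm_sq, hnc] at h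
    nlinarith
  have hmcu : m * 1 + n * (7 / 8) = ⟪c, u⟫ := by
    have h := congrArg (fun x => ⟪x, u⟫) hmn
    simp only [inner_add_left, real_inner_smul_left, huu, hvu] at h
    linarith
  have hm2 : m ^ 2 = 1 := by
    linear_combination (64/15) * hmcc + (64*m/15) * hmcu - (64/15)*(1/8 + 7*m/8) * hmcv
  -- rule out t = -1 (bad A configuration: w = u - v)
  have htval : t = 1 := by
    have hcases : (t - 1) * (t + 1) = 0 := by nlinarith
    rcases mul_eq_zero.1 hcases with h | h
    · linarith
    · exfalso
      have htm : t = -1 := by linarith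
      have hsval : s = 1 := by rw [htm] at hswu; linarith
      have hwuv : w = u - v := by
        rw [← hst, hsval, htm]; module
      obtain ⟨f, hfFA, hfle, hflt⟩ := pentagon_support_aux hPconv hne hFA hF hA
      set p : ℝ := f E - f B with hp
      set q : ℝ := f F - f B with hq
      have hfAB : f A - f B = p - q := by
        have : f (A - B) = f (E - B) - f (F - B) := by
          rw [show A - B = (E - B) - (F - B) from by rw [← hw_def, ← hu_def, ← hv_def, hwuv],
            map_sub]
        rw [map_sub, map_sub, map_sub] at this
        rw [hp, hq]; linarith
      have hpq1 : q = p - q := by rw [hq]; linarith [hfFA, hfAB]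
      have hpq2 : 0 ≤ q := by
        have := hfle B hB; rw [hq]; linarith
      have hpq3 : p ≤ q := by
        have := hfle E hE; rw [hp, hq]; linarith
      have hq0 : q = 0 := by linarith
      have hp0 : p = 0 := by linarith
      refine hcontra f ?_ ?_ ?_
      · rw [hu_def, map_sub]; rw [hp] at hp0; linarith
      · rw [hv_def, map_sub]; rw [hq] at hq0; linarith
      · intro a ha
        have := hflt a ha
        have hFB : f F = f B := by rw [hq] at hq0; linarith
        linarith
  have hsval : s = -(3/4) := by rw [htval] at hswu; linarith
  have hdFA : dist F A = 3 / 4 := by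
    have hFAu : F - A = (3/4 : ℝ) • u := by
      have h1 : F - A = v - w := by rw [hv_def, hw_def]; abel
      have h2 : w = (-(3/4) : ℝ) • u + (1 : ℝ) • v := by rw [← hst, hsval, htval]
      rw [h1, h2]; module
    rw [dist_eq_norm, hFAu, norm_smul, hnu]
    norm_num
  -- rule out m = -1 (bad C configuration: c = v - u)
  have hmval : m = 1 := by
    have hcases : (m - 1) * (m + 1) = 0 := by nlinarith
    rcases mul_eq_zero.1 hcases with h | h
    · linarith
    · exfalso
      have hmm : m = -1 := by linarith
      have hnval : n = 1 := by rw [hmm] at hmcv; linarith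
      have hcvu : c = v - u := by
        rw [← hmn, hmm, hnval]; module
      obtain ⟨f, hfCE, hfle, hflt⟩ := pentagon_support_aux hPconv hne hCE hC hE
      set p : ℝ := f E - f B with hp
      set q : ℝ := f F - f B with hq
      have hfCB : f C - f B = q - p := by
        have : f (C - B) = f (F - B) - f (E - B) := by
          rw [show C - B = (F - B) - (E - B) from by rw [← hc_def, ← hu_def, ← hv_def, hcvu],
            map_sub]
        rw [map_sub, map_sub, map_sub] at this
        rw [hp, hq]; linarith
      have hpq1 : q - p = p := by rw [hp] at *; linarith [hfCE, hfCB]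
      have hpq2 : 0 ≤ q - p := by
        have := hfle B hB; linarith [hfCB]
      have hpq3 : q ≤ q - p := by
        have := hfle F hF; rw [hq] at *; linarith [hfCB]
      have hp0 : p = 0 := by linarith
      have hq0 : q = 0 := by linarith
      refine hcontra f ?_ ?_ ?_
      · rw [hu_def, map_sub]; rw [hp] at hp0; linarith
      · rw [hv_def, map_sub]; rw [hq] at hq0; linarith
      · intro a ha
        have := hflt a ha
        have hCB : f C = f B := by linarith [hfCB]
        linarith
  have hnval : n = -(3/4) := by rw [hmval] at hmcv; linarith
  have hdCE : dist C E = 3 / 4 := by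
    have hCEv : C - E = (-(3/4) : ℝ) • v := by
      have h1 : C - E = c - u := by rw [hc_def, hu_def]; abel
      have h2 : c = (1 : ℝ) • u + (-(3/4) : ℝ) • v := by rw [← hmn, hmval, hnval]
      rw [h1, h2]; module
    rw [dist_eq_norm, hCEv, norm_smul, hnv]
    norm_num
  rw [hdAB, hdBC, hdCE, hdEF, hdFA]
  norm_num
end
end

section
/- In the pentagon with dist(A,E) = dist(B,E) = dist(B,F) = dist(C,F) = 1 and angles α = ∠EAB = ∠EBA, γ = ∠BEF = ∠BFE arranged so that ∠EBF = π − 2γ, the diagonal satisfies dist(A,F)² = 1 + 4cos²(α) + 4cos(α)cos(α + 2γ). -/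
/-!
Since `|AE| = |BE| = 1`, the isosceles triangle `ABE` has `|AB| = 2 cos α`, and the law of
cosines in `ABF` reduces the claim to `cos ∠ABF = -cos (α + 2γ)`. Because `BE` is an edge of
the convex hull, a line supporting the hull at the midpoint of `BE` keeps `A` and `F` on one
side of the line `BE`; comparing oriented angles at `B` then gives
`cos ∠ABF = cos (∠EBA - ∠EBF) = cos (α - (π - 2γ))`.
-/

open Real EuclideanGeometry

local notation "E2" => EuclideanSpace ℝ (Fin 2)

section Plane

variable {V P : Type*} [AddCommGroup V] [Module ℝ V] [AddTorsor V P] {A B E F : P}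

theorem affineSpan_eq_top_of_notMem_affineSpan_pair (hV : Module.finrank ℝ V = 2) (hBE : B ≠ E)
    (hA : A ∉ line[ℝ, B, E]) : affineSpan ℝ {A, B, E} = ⊤ := by
  have : FiniteDimensional ℝ V := Module.finite_of_finrank_eq_succ hV
  have hind : AffineIndependent ℝ ![A, B, E] := affineIndependent_iff_not_collinear_set.2
    fun h => hA (h.mem_affineSpan_of_mem_of_ne (by simp) (by simp) (by simp) hBE)
  have hrange : Set.range ![A, B, E] = {A, B, E} := by
    simp_rw [Matrix.range_cons, Matrix.range_empty, Set.singleton_union, insert_empty_eq]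
  rw [← hrange, hind.affineSpan_eq_top_iff_card_eq_finrank_add_one, hV]
  simp

theorem sSameSide_of_not_sOppSide (hV : Module.finrank ℝ V = 2) (hBE : B ≠ E)
    (hA : A ∉ line[ℝ, B, E]) (hF : F ∉ line[ℝ, B, E])
    (h : ¬ line[ℝ, B, E].SOppSide A F) : line[ℝ, B, E].SSameSide A F := by
  have hB := left_mem_affineSpan_pair ℝ B E
  have hFmem : F ∈ affineSpan ℝ (insert A (line[ℝ, B, E] : Set P)) := by
    rw [affineSpan_insert_affineSpan, affineSpan_eq_top_of_notMem_affineSpan_pair hV hBE hA]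
    exact AffineSubspace.mem_top ℝ V F
  obtain ⟨r, p, hp, rfl⟩ := (AffineSubspace.mem_affineSpan_insert_iff hB A F).1 hFmem
  rcases lt_trichotomy r 0 with hr | rfl | hr
  · exact absurd (AffineSubspace.sOppSide_smul_vsub_vadd_right hA hB hp hr) h
  · exact absurd (by simpa using hp) hF
  · exact AffineSubspace.sSameSide_smul_vsub_vadd_right hA hB hp hr

end Plane

section Oriented

variable {V P : Type*} [NormedAddCommGroup V] [InnerProductSpace ℝ V] [MetricSpace P]
  [NormedAddTorsor V P]

section

variable [Fact (Module.finrank ℝ V = 2)] [Module.Oriented ℝ V (Fin 2)] {p p₁ p₂ : P}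

theorem oangle_eq_angle_of_sign_nonneg (hp₁ : p₁ ≠ p) (hp₂ : p₂ ≠ p)
    (h : 0 ≤ (∡ p₁ p p₂).sign) : ∡ p₁ p p₂ = ∠ p₁ p p₂ := by
  rw [angle_eq_abs_oangle_toReal hp₁ hp₂, Real.Angle.coe_abs_toReal_of_sign_nonneg h]

theorem oangle_eq_neg_angle_of_sign_nonpos (hp₁ : p₁ ≠ p) (hp₂ : p₂ ≠ p)
    (h : (∡ p₁ p p₂).sign ≤ 0) : ∡ p₁ p p₂ = -∠ p₁ p p₂ := by
  rw [angle_eq_abs_oangle_toReal hp₁ hp₂, Real.Angle.neg_coe_abs_toReal_of_sign_nonpos h]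

theorem oangle_sign_eq_zero_of_mem_affineSpan_pair {A B E : P} (hA : A ∈ line[ℝ, B, E]) :
    (∡ E B A).sign = 0 := by
  rw [oangle_sign_eq_zero_iff_collinear]
  refine (collinear_insert_of_mem_affineSpan_pair hA).subset ?_
  simp [Set.insert_subset_iff]

end

theorem cos_angle_eq_cos_sub_of_not_sOppSide (hV : Module.finrank ℝ V = 2) {A B E F : P}
    (hA : A ≠ B) (hE : E ≠ B) (hF : F ≠ B) (h : ¬ line[ℝ, B, E].SOppSide A F) :
    Real.cos (∠ A B F) = Real.cos (∠ E B A - ∠ E B F) := by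
  have : Fact (Module.finrank ℝ V = 2) := ⟨hV⟩
  have : FiniteDimensional ℝ V := Module.finite_of_finrank_eq_succ hV
  -- the claim is unoriented, so any orientation will do
  have : Module.Oriented ℝ V (Fin 2) := ⟨(Module.finBasisOfFinrankEq ℝ V hV).orientation⟩
  have hsigns : (0 ≤ (∡ E B A).sign ∧ 0 ≤ (∡ E B F).sign) ∨
      ((∡ E B A).sign ≤ 0 ∧ (∡ E B F).sign ≤ 0) := by
    by_cases hAl : A ∈ line[ℝ, B, E]
    · rw [oangle_sign_eq_zero_of_mem_affineSpan_pair hAl]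
      exact (le_total 0 _).imp (⟨le_rfl, ·⟩) (⟨le_rfl, ·⟩)
    by_cases hFl : F ∈ line[ℝ, B, E]
    · rw [oangle_sign_eq_zero_of_mem_affineSpan_pair hFl]
      exact (le_total 0 _).imp (⟨·, le_rfl⟩) (⟨·, le_rfl⟩)
    have hsame := (sSameSide_of_not_sOppSide hV hE.symm hAl hFl h).oangle_sign_eq
      (left_mem_affineSpan_pair ℝ B E) (right_mem_affineSpan_pair ℝ B E)
    rw [oangle_rotate_sign, oangle_rotate_sign E B A] at hsame
    rw [hsame]
    exact (le_total 0 _).imp (fun h => ⟨h, h⟩) (fun h => ⟨h, h⟩)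
  have hdiff : ∡ A B F = ∡ E B F - ∡ E B A := by
    rw [← oangle_add hA hE hF, oangle_rev E B A]
    abel
  rw [← cos_oangle_eq_cos_angle hA hF, hdiff]
  rcases hsigns with ⟨hsA, hsF⟩ | ⟨hsA, hsF⟩
  · rw [oangle_eq_angle_of_sign_nonneg hE hA hsA, oangle_eq_angle_of_sign_nonneg hE hF hsF,
      ← Real.Angle.coe_sub, Real.Angle.cos_coe, ← Real.cos_neg, neg_sub]
  · rw [oangle_eq_neg_angle_of_sign_nonpos hE hA hsA, oangle_eq_neg_angle_of_sign_nonpos hE hF hsF,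
      neg_sub_neg, ← Real.Angle.coe_sub, Real.Angle.cos_coe]

end Oriented

section Convex

variable {V : Type*} [NormedAddCommGroup V] [NormedSpace ℝ V] {A B E F : V}

theorem not_sOppSide_of_segment_subset_frontier_convexHull
    (hint : (interior (convexHull ℝ {A, B, E, F})).Nonempty)
    (hBE : segment ℝ B E ⊆ frontier (convexHull ℝ {A, B, E, F})) :
    ¬ line[ℝ, B, E].SOppSide A F := by
  intro hAF
  set Q := convexHull ℝ ({A, B, E, F} : Set V)
  have hQ : Convex ℝ Q := convex_convexHull ℝ _
  -- `f` supports `Q` at the midpoint of `BE`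
  obtain ⟨f, hf⟩ := geometric_hahn_banach_open_point hQ.interior isOpen_interior
    (hBE (midpoint_mem_segment B E)).2
  set c := f (midpoint ℝ B E)
  have hle : ∀ x ∈ closure Q, f x ≤ c := by
    rw [← hQ.closure_interior_eq_closure_of_nonempty_interior hint]
    exact closure_minimal (fun x hx => (hf x hx).le) (isClosed_le f.continuous continuous_const)
  have hB := hle B (frontier_subset_closure (hBE (left_mem_segment ℝ B E)))
  have hE := hle E (frontier_subset_closure (hBE (right_mem_segment ℝ B E)))
  have hc : c = (f B + f E) / 2 := by
    simp only [c, midpoint_eq_smul_add, map_smul, map_add, smul_eq_mul, invOf_eq_inv]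
    ring
  have hBc : f B = c := by linarith
  have hEc : f E = c := by linarith
  -- `f ≤ c` at `A` and `F`, and `f = c` at a point strictly between them, so `f A = f F = c`
  obtain ⟨P, hP, hAPF⟩ := hAF.exists_sbtw
  obtain ⟨t, ⟨ht0, ht1⟩, rfl⟩ := hAPF.mem_image_Ioo
  have hA := hle A (subset_closure (subset_convexHull ℝ _ (by simp)))
  have hF := hle F (subset_closure (subset_convexHull ℝ _ (by simp)))
  have hPc : (1 - t) * f A + t * f F = c := by
    obtain ⟨r, hr⟩ := mem_affineSpan_pair_iff_exists_lineMap_eq.1 hP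
    have := congrArg f hr
    simp only [AffineMap.lineMap_apply_module, map_add, map_smul, smul_eq_mul, hBc, hEc] at this
    linear_combination -this
  have hsub : Q ⊆ {x | c ≤ f x} := by
    refine convexHull_min ?_ (convex_halfSpace_ge f.isLinear c)
    simp only [Set.insert_subset_iff, Set.singleton_subset_iff, Set.mem_ofPred_eq]
    refine ⟨?_, hBc.ge, hEc.ge, ?_⟩ <;> nlinarith
  obtain ⟨a, ha⟩ := hint
  exact (hf a ha).not_ge (hsub (interior_subset ha))

theorem not_sOppSide_of_segment_subset_frontier_convexHull_of_finrank_eq_two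
    (hV : Module.finrank ℝ V = 2) (hBE : B ≠ E)
    (h : segment ℝ B E ⊆ frontier (convexHull ℝ {A, B, E, F})) :
    ¬ line[ℝ, B, E].SOppSide A F := by
  have : FiniteDimensional ℝ V := Module.finite_of_finrank_eq_succ hV
  refine fun hAF => not_sOppSide_of_segment_subset_frontier_convexHull ?_ h hAF
  rw [interior_convexHull_nonempty_iff_affineSpan_eq_top, eq_top_iff,
    ← affineSpan_eq_top_of_notMem_affineSpan_pair hV hBE hAF.left_notMem]
  exact affineSpan_mono ℝ (by simp [Set.insert_subset_iff])

end Convex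

theorem dist_eq_two_mul_dist_mul_cos_of_dist_eq {V P : Type*} [NormedAddCommGroup V]
    [InnerProductSpace ℝ V] [MetricSpace P] [NormedAddTorsor V P] {A B E : P}
    (h : dist A E = dist B E) (hAB : A ≠ B) :
    dist A B = 2 * dist B E * Real.cos (∠ E B A) := by
  have hlaw := law_cos E B A
  rw [dist_comm E A, dist_comm E B, h] at hlaw
  exact mul_left_cancel₀ (dist_ne_zero.2 hAB) (by linarith)

theorem pentagon_diagonal_formula_general (α γ : ℝ) (A B E F : E2) (Q : Set E2)
    (hQ : Q = convexHull ℝ ({A, B, E, F} : Set E2))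
    (hBE : segment ℝ B E ⊆ frontier Q)
    (hAE : dist A E = 1) (hBEd : dist B E = 1) (hBF : dist B F = 1)
    (h2 : ∠ E B A = α)
    (h5 : ∠ E B F = π - 2 * γ) :
    dist A F ^ 2 = 1 + 4 * Real.cos α ^ 2 + 4 * Real.cos α * Real.cos (α + 2 * γ) := by
  subst hQ
  have hEB : E ≠ B := dist_ne_zero.1 (by rw [dist_comm, hBEd]; norm_num)
  have hFB : F ≠ B := dist_ne_zero.1 (by rw [dist_comm, hBF]; norm_num)
  by_cases hAB : A = B
  · subst hAB
    rw [angle_self_right] at h2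
    rw [hBF, ← h2, cos_pi_div_two]
    ring
  have hdAB : dist A B = 2 * Real.cos α := by
    rw [dist_eq_two_mul_dist_mul_cos_of_dist_eq (hAE.trans hBEd.symm) hAB, hBEd, h2, mul_one]
  have hside := not_sOppSide_of_segment_subset_frontier_convexHull_of_finrank_eq_two
    finrank_euclideanSpace_fin hEB.symm hBE
  have hcos : Real.cos (∠ A B F) = -Real.cos (α + 2 * γ) := by
    rw [cos_angle_eq_cos_sub_of_not_sOppSide finrank_euclideanSpace_fin hAB hEB hFB hside, h2, h5,
      show α - (π - 2 * γ) = α + 2 * γ - π by ring, Real.cos_sub_pi]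
  rw [sq, law_cos A B F, hdAB, dist_comm F B, hBF, hcos]
  ring

/-- In the convex configuration `A, B, E, F` (part of the pentagon) with
`|AE| = |BE| = |BF| = 1`, base angles `α` at `A` and `B` in triangle `ABE`, base angles `γ`
at `E` and `F` in triangle `EBF` (so that `∠EBF = π − 2γ`), the diagonal satisfies
`|AF|² = 1 + 4cos²α + 4cos α · cos(α + 2γ)`. -/
theorem pentagon_diagonal_formula (α γ : ℝ) (A B E F : E2) (Q : Set E2)
    (hQ : Q = convexHull ℝ ({A, B, E, F} : Set E2))
    (hAB : segment ℝ A B ⊆ frontier Q)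
    (hBE : segment ℝ B E ⊆ frontier Q)
    (hEF : segment ℝ E F ⊆ frontier Q)
    (hFA : segment ℝ F A ⊆ frontier Q)
    (hAE : dist A E = 1) (hBEd : dist B E = 1) (hBF : dist B F = 1)
    (h1 : ∠ E A B = α) (h2 : ∠ E B A = α)
    (h3 : ∠ B E F = γ) (h4 : ∠ B F E = γ)
    (h5 : ∠ E B F = π - 2 * γ) :
    dist A F ^ 2 = 1 + 4 * Real.cos α ^ 2 + 4 * Real.cos α * Real.cos (α + 2 * γ) :=
  pentagon_diagonal_formula_general α γ A B E F Q hQ hBE hAE hBEd hBF h2 h5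
end

section
/- For θ ∈ (0, π/3] the function f(x) = 1 + 4cos²(x) − 4cos(x)cos(x − θ) is strictly increasing on the interval [π/3, π/2], and f(π/3) = 2 − 2cos(π/3 − θ) < 1 = f(π/2). -/
open Real

/-- For `θ ∈ (0, π/3]`, the function `f(x) = 1 + 4cos²x − 4 cos x · cos(x − θ)` is strictly
increasing on `[π/3, π/2]`, with `f(π/3) = 2 − 2cos(π/3 − θ) < 1 = f(π/2)`. -/
theorem f_strict_mono_and_endpoint_values (θ : ℝ) (hθ0 : 0 < θ) (hθ : θ ≤ π / 3) :
    StrictMonoOn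
      (fun x : ℝ => 1 + 4 * Real.cos x ^ 2 - 4 * Real.cos x * Real.cos (x - θ))
      (Set.Icc (π / 3) (π / 2)) ∧
    (1 + 4 * Real.cos (π / 3) ^ 2 - 4 * Real.cos (π / 3) * Real.cos (π / 3 - θ)
      = 2 - 2 * Real.cos (π / 3 - θ)) ∧
    2 - 2 * Real.cos (π / 3 - θ) < 1 ∧
    1 + 4 * Real.cos (π / 2) ^ 2 - 4 * Real.cos (π / 2) * Real.cos (π / 2 - θ) = 1 := by
  have hπ : (0:ℝ) < π := Real.pi_pos
  have key : ∀ x : ℝ, 1 + 4 * Real.cos x ^ 2 - 4 * Real.cos x * Real.cos (x - θ)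
      = 3 - 2 * Real.cos θ - 4 * Real.sin (θ/2) * Real.sin (2*x - θ/2) := by
    intro x
    have h1 : Real.cos (x - θ) = Real.cos x * Real.cos θ + Real.sin x * Real.sin θ :=
      Real.cos_sub x θ
    have h2 : Real.sin (2*x - θ/2)
        = Real.sin (2*x) * Real.cos (θ/2) - Real.cos (2*x) * Real.sin (θ/2) :=
      Real.sin_sub _ _
    have h3 : Real.sin (2*x) = 2 * Real.sin x * Real.cos x := Real.sin_two_mul x
    have h4 : Real.cos (2*x) = 2 * Real.cos x ^ 2 - 1 := Real.cos_two_mul x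
    have h5 : Real.cos θ = 2 * Real.cos (θ/2) ^ 2 - 1 := by
      have := Real.cos_two_mul (θ/2); rwa [show 2*(θ/2)=θ by ring] at this
    have h6 : Real.sin θ = 2 * Real.sin (θ/2) * Real.cos (θ/2) := by
      have := Real.sin_two_mul (θ/2); rwa [show 2*(θ/2)=θ by ring] at this
    have p1 : Real.sin x ^ 2 + Real.cos x ^ 2 = 1 := Real.sin_sq_add_cos_sq x
    have p2 : Real.sin (θ/2) ^ 2 + Real.cos (θ/2) ^ 2 = 1 := Real.sin_sq_add_cos_sq (θ/2)
    rw [h1, h2, h3, h4, h5, h6]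
    nlinarith [p1, p2, sq_nonneg (Real.sin x), sq_nonneg (Real.cos x)]
  have hs : 0 < Real.sin (θ/2) := by
    apply Real.sin_pos_of_pos_of_lt_pi (by linarith)
    linarith
  constructor
  · intro x hx y hy hxy
    simp only
    rw [key x, key y]
    have hx1 := hx.1; have hx2 := hx.2; have hy1 := hy.1; have hy2 := hy.2
    have hsin : Real.sin (2*y - θ/2) < Real.sin (2*x - θ/2) := by
      rw [← Real.cos_sub_pi_div_two (2*x - θ/2), ← Real.cos_sub_pi_div_two (2*y - θ/2)]
      apply Real.strictAntiOn_cos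
      · constructor <;> [linarith; linarith]
      · constructor <;> [linarith; linarith]
      · linarith
    nlinarith
  refine ⟨by rw [Real.cos_pi_div_three]; ring, ?_, by rw [Real.cos_pi_div_two]; ring⟩
  have : Real.cos (π/3) < Real.cos (π/3 - θ) := by
    apply Real.strictAntiOn_cos
    · constructor <;> linarith
    · constructor <;> linarith
    · linarith
  rw [Real.cos_pi_div_three] at this
  linarith
end
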